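/- Define F_r := Σ_{m=0}^{r} (−1)^m Σ_{ρ ⊢ m} a_{r+3}(\bar{ρ⁺}), where a_{r+3}(λ) counts tilings of a convex (r+3)-gon of shape λ and \bar{ρ⁺} = ρ⁺ ∪ 1^{r+1−|ρ⁺|} is the triangle-completion to weight r+1 (the term is zero if |ρ⁺| > r+1). Then F_r = 1 for every r ≥ 0. -/

import Mathlib

open scoped Classical

noncomputable section

/-- `μ⁺`: increase every part of the partition by one. -/
def pplus (μ : Multiset ℕ) : Multiset ℕ := μ.map (· + 1)

/-- `μ⁻`: decrease every part by one, deleting the parts that become zero. -/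
def pminus (μ : Multiset ℕ) : Multiset ℕ := (μ.map (· - 1)).filter (· ≠ 0)

/-- triangle completion `\bar{γ}^m`: pad with parts equal to 1 up to weight `m`. -/
def pcomp (m : ℕ) (γ : Multiset ℕ) : Multiset ℕ := γ + Multiset.replicate (m - γ.sum) 1

namespace Polygon

/-- `{a,b}` (with `a < b`) is a diagonal of the convex `n`-gon with vertices `0,…,n-1`:
non-adjacent pair of vertices. -/
def IsDiag (n : ℕ) (a b : Fin n) : Prop :=
  a.val + 2 ≤ b.val ∧ ¬(a.val = 0 ∧ b.val + 1 = n)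

/-- The type of diagonals of the convex `n`-gon, as ordered pairs. -/
abbrev Diag (n : ℕ) := {p : Fin n × Fin n // IsDiag n p.1 p.2}

/-- Two diagonals cross iff their endpoints strictly interleave around the polygon. -/
def Cross {n : ℕ} (d e : Diag n) : Prop :=
  (d.1.1.val < e.1.1.val ∧ e.1.1.val < d.1.2.val ∧ d.1.2.val < e.1.2.val) ∨
  (e.1.1.val < d.1.1.val ∧ d.1.1.val < e.1.2.val ∧ e.1.2.val < d.1.2.val)

/-- A tiling of the `n`-gon: a set of pairwise non-crossing diagonals. -/
def IsTiling (n : ℕ) (T : Finset (Diag n)) : Prop :=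
  ∀ d ∈ T, ∀ e ∈ T, ¬ Cross d e

/-- The diagonal `d` separates the vertices `x` and `y`: they lie strictly on opposite
sides of `d`. -/
def Sep {n : ℕ} (d : Diag n) (x y : Fin n) : Prop :=
  ((d.1.1.val < x.val ∧ x.val < d.1.2.val) ∧ (y.val < d.1.1.val ∨ d.1.2.val < y.val)) ∨
  ((d.1.1.val < y.val ∧ y.val < d.1.2.val) ∧ (x.val < d.1.1.val ∨ d.1.2.val < x.val))

/-- No diagonal of `T` separates any two elements of `S`. -/
def NonSepSet (n : ℕ) (T : Finset (Diag n)) (S : Finset (Fin n)) : Prop :=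
  ∀ x ∈ S, ∀ y ∈ S, ∀ d ∈ T, ¬ Sep d x y

/-- A tile of the tiling `T`: a maximal set of vertices not separated by any diagonal of
`T` (the vertex set of a face of the dissection). -/
def IsTile (n : ℕ) (T : Finset (Diag n)) (S : Finset (Fin n)) : Prop :=
  NonSepSet n T S ∧ ∀ S' : Finset (Fin n), S ⊆ S' → NonSepSet n T S' → S' = S

/-- The set of tiles of `T`. -/
def tiles (n : ℕ) (T : Finset (Diag n)) : Finset (Finset (Fin n)) :=
  Finset.univ.filter (IsTile n T)

/-- The shape of a tiling: one part `i` for each tile that is an `(i+2)`-gon. -/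
def shape (n : ℕ) (T : Finset (Diag n)) : Multiset ℕ :=
  (tiles n T).val.map (fun S => S.card - 2)

/-- `a n λ`: the number of tilings of the `n`-gon of shape `λ`. -/
def a (n : ℕ) (lam : Multiset ℕ) : ℕ :=
  (Finset.univ.filter (fun T : Finset (Diag n) => IsTiling n T ∧ shape n T = lam)).card

/-- Number of tilings of the `n`-gon using exactly `k` diagonals. -/
def tcount (n k : ℕ) : ℕ :=
  (Finset.univ.filter (fun T : Finset (Diag n) => IsTiling n T ∧ T.card = k)).card

/-- A flip: remove a diagonal `d`, so that a quadrilateral tile `Q` appears, and insert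
the other diagonal `d'` of `Q`. -/
def Flip (n : ℕ) (T T' : Finset (Diag n)) : Prop :=
  ∃ d d' : Diag n, d ∈ T ∧ d ≠ d' ∧ T' = insert d' (T.erase d) ∧
    ∃ Q : Finset (Fin n), IsTile n (T.erase d) Q ∧ Q.card = 4 ∧
      d.1.1 ∈ Q ∧ d.1.2 ∈ Q ∧ d'.1.1 ∈ Q ∧ d'.1.2 ∈ Q

/-- Flip equivalence: the equivalence relation generated by flips. -/
def FlipEquiv (n : ℕ) : Finset (Diag n) → Finset (Diag n) → Prop :=
  Relation.EqvGen (Flip n)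

/-- Flip equivalence restricted to the tilings of shape `λ`. -/
def flipSetoid (n : ℕ) (lam : Multiset ℕ) :
    Setoid {T : Finset (Diag n) // IsTiling n T ∧ shape n T = lam} :=
  Setoid.comap Subtype.val ⟨FlipEquiv n, Relation.EqvGen.is_equivalence _⟩

/-- `ae n λ`: the number of flip-equivalence classes of tilings of the `n`-gon of shape `λ`. -/
def ae (n : ℕ) (lam : Multiset ℕ) : ℕ := Nat.card (Quotient (flipSetoid n lam))

/-- Adjacency of triangular tiles: sharing an edge (two vertices). -/
def triSetoid (n : ℕ) (T : Finset (Diag n)) :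
    Setoid {S : Finset (Fin n) // S ∈ tiles n T ∧ S.card = 3} :=
  ⟨Relation.EqvGen (fun A B => (A.val ∩ B.val).card = 2), Relation.EqvGen.is_equivalence _⟩

/-- `f⁺(T)`: the multiset of numbers of triangles in the maximal triangulated regions
(= connected components of the adjacency relation on triangular tiles). -/
def fplus (n : ℕ) (T : Finset (Diag n)) : Multiset ℕ :=
  (Finset.univ : Finset (Quotient (triSetoid n T))).val.map
    (fun c => Nat.card {v // Quotient.mk (triSetoid n T) v = c})

/-- `f(T) = f⁺(T)⁻`. -/
def fval (n : ℕ) (T : Finset (Diag n)) : Multiset ℕ := pminus (fplus n T)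

/-- `a_{λ,ν}`: number of tilings of shape `λ` with `f`-value `ν`. -/
def aln (n : ℕ) (lam nu : Multiset ℕ) : ℕ :=
  (Finset.univ.filter
    (fun T : Finset (Diag n) => IsTiling n T ∧ shape n T = lam ∧ fval n T = nu)).card

/-- Flip equivalence restricted to tilings of shape `λ` and `f`-value `ν`. -/
def flipSetoidLN (n : ℕ) (lam nu : Multiset ℕ) :
    Setoid {T : Finset (Diag n) // IsTiling n T ∧ shape n T = lam ∧ fval n T = nu} :=
  Setoid.comap Subtype.val ⟨FlipEquiv n, Relation.EqvGen.is_equivalence _⟩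

/-- `ae_{λ,ν}`: number of flip classes of tilings of shape `λ` with `f`-value `ν`. -/
def aeln (n : ℕ) (lam nu : Multiset ℕ) : ℕ := Nat.card (Quotient (flipSetoidLN n lam nu))

end Polygon

/-!
Write `a_{r+3}(λ)` as a count of tilings and exchange the sums. A tiling `T` with `k`
diagonals has `k + 1` tiles, each with at least three vertices, and `r + 3 + 2k` vertex
incidences in total; so its shape `λ` has `k + 1` positive parts and weight `r + 1`. Then
`λ = \bar{ρ⁺}` holds for exactly one `ρ`, namely `ρ = λ⁻`, a partition of `r - k`. Hence
`F_r = (-1)^r ∑_T (-1)^{|T|}`.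

The tile counts follow by induction, removing a shortest diagonal `d`: the polygon cut off by
`d` is a tile, and removing `d` merges it with the tile on the other side of `d`.

The Euler sum `∑_T (-1)^{|T|}` over tilings of the `(n + 3)`-gon is `(-1)^n`: toggling the
shortest toggleable diagonal from vertex `0` cancels the tilings not containing `{1, n + 2}`,
and the tilings containing it are those of the `(n + 2)`-gon on the vertices `1, …, n + 2`
plus that diagonal.
-/

theorem sum_pplus (s : Multiset ℕ) : (pplus s).sum = s.sum + Multiset.card s := by
  induction s using Multiset.induction with
  | empty => simp [pplus]
  | cons a s ih => simp only [pplus] at ih ⊢; simp [ih]; ring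

theorem card_pplus (s : Multiset ℕ) : Multiset.card (pplus s) = Multiset.card s :=
  Multiset.card_map _ _

theorem pminus_pplus {s : Multiset ℕ} (hs : ∀ x ∈ s, 0 < x) : pminus (pplus s) = s := by
  rw [pminus, pplus, Multiset.map_map]
  simpa using Multiset.filter_eq_self.2 fun x hx => (hs x hx).ne'

theorem pminus_pcomp (w : ℕ) (γ : Multiset ℕ) : pminus (pcomp w γ) = pminus γ := by
  simpa [pminus, pcomp, Multiset.filter_add, Multiset.map_replicate, Multiset.filter_eq_nil]
    using fun _ => Multiset.eq_of_mem_replicate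

theorem Multiset.filter_ne_add_replicate_count {α : Type*} [DecidableEq α] (s : Multiset α)
    (a : α) : s.filter (· ≠ a) + Multiset.replicate (s.count a) a = s := by
  rw [← Multiset.filter_eq', add_comm]
  exact Multiset.filter_add_not _ _

theorem pplus_pminus {lam : Multiset ℕ} (h : ∀ x ∈ lam, 1 ≤ x) :
    pplus (pminus lam) = lam.filter (· ≠ 1) := by
  rw [pplus, pminus, Multiset.filter_map, Multiset.map_map]
  rw [Multiset.filter_congr (q := (· ≠ 1)) fun x hx => by
    have := h x hx; simp only [Function.comp_apply]; omega]
  refine (Multiset.map_congr rfl fun x hx => ?_).trans (Multiset.map_id _)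
  have := h x (Multiset.mem_of_mem_filter hx)
  simp only [Function.comp_apply, id_eq]
  omega

theorem sum_pminus_add_card {lam : Multiset ℕ} (h : ∀ x ∈ lam, 1 ≤ x) :
    (pminus lam).sum + Multiset.card lam = lam.sum := by
  have hsum := congrArg Multiset.sum (lam.filter_ne_add_replicate_count 1)
  have hcard := congrArg Multiset.card (lam.filter_ne_add_replicate_count 1)
  have hplus := sum_pplus (pminus lam)
  rw [← card_pplus, pplus_pminus h] at hplus
  simp only [Multiset.sum_add, Multiset.card_add, Multiset.sum_replicate,
    Multiset.card_replicate, smul_eq_mul, mul_one] at hsum hcard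
  omega

theorem pcomp_pplus_pminus {lam : Multiset ℕ} (h : ∀ x ∈ lam, 1 ≤ x) :
    pcomp lam.sum (pplus (pminus lam)) = lam := by
  have hsum := congrArg Multiset.sum (lam.filter_ne_add_replicate_count 1)
  simp only [Multiset.sum_add, Multiset.sum_replicate, smul_eq_mul, mul_one] at hsum
  rw [pcomp, pplus_pminus h, ← hsum, Nat.add_sub_cancel_left]
  exact lam.filter_ne_add_replicate_count 1

theorem pos_of_mem_pminus {lam : Multiset ℕ} {x : ℕ} (hx : x ∈ pminus lam) : 0 < x :=
  Nat.pos_of_ne_zero (Multiset.mem_filter.1 hx).2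

theorem pcomp_pplus_eq_iff {lam : Multiset ℕ} (h : ∀ x ∈ lam, 1 ≤ x) {m : ℕ}
    (ρ : Nat.Partition m) : pcomp lam.sum (pplus ρ.parts) = lam ↔ ρ.parts = pminus lam := by
  constructor
  · intro hρ
    rw [← hρ, pminus_pcomp, pminus_pplus fun _ => ρ.parts_pos]
  · intro hρ
    rw [hρ, pcomp_pplus_pminus h]

open Finset in
theorem card_filter_pcomp_pplus_eq {lam : Multiset ℕ} (h : ∀ x ∈ lam, 1 ≤ x) (m : ℕ) :
    #{ρ : Nat.Partition m | pcomp lam.sum (pplus ρ.parts) = lam}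
      = if m + Multiset.card lam = lam.sum then 1 else 0 := by
  simp_rw [pcomp_pplus_eq_iff h]
  have hsum := sum_pminus_add_card h
  split_ifs with hm
  · rw [card_eq_one]
    refine ⟨⟨pminus lam, pos_of_mem_pminus, by omega⟩, ?_⟩
    ext ρ
    simp [Nat.Partition.ext_iff]
  · rw [card_eq_zero, filter_eq_empty_iff]
    intro ρ _ hρ
    have := ρ.parts_sum
    rw [hρ] at this
    omega

open Finset in
theorem sum_range_neg_one_pow_mul_card_filter_pcomp {lam : Multiset ℕ}
    (h : ∀ x ∈ lam, 1 ≤ x) (hlam : lam ≠ 0) :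
    ∑ m ∈ range lam.sum,
        (-1 : ℤ) ^ m * #{ρ : Nat.Partition m | pcomp lam.sum (pplus ρ.parts) = lam}
      = (-1) ^ (lam.sum - Multiset.card lam) := by
  have hcard : Multiset.card lam ≤ lam.sum := by
    simpa using Multiset.card_nsmul_le_sum h
  have hpos : 0 < Multiset.card lam := Multiset.card_pos.2 hlam
  simp_rw [card_filter_pcomp_pplus_eq h]
  rw [sum_eq_single_of_mem (lam.sum - Multiset.card lam) (mem_range.2 (by omega)),
    if_pos (by omega), Nat.cast_one, mul_one]
  intro m _ hm
  rw [if_neg (by omega), Nat.cast_zero, mul_zero]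

namespace Polygon

variable {n : ℕ}

def Diag.inner (d : Diag n) : Finset (Fin n) :=
  Finset.univ.filter fun x => d.1.1.val ≤ x.val ∧ x.val ≤ d.1.2.val

def Diag.outer (d : Diag n) : Finset (Fin n) :=
  Finset.univ.filter fun x => x.val ≤ d.1.1.val ∨ d.1.2.val ≤ x.val

@[simp]
theorem Diag.mem_inner {d : Diag n} {x : Fin n} :
    x ∈ d.inner ↔ d.1.1.val ≤ x.val ∧ x.val ≤ d.1.2.val := by
  simp [Diag.inner]

@[simp]
theorem Diag.mem_outer {d : Diag n} {x : Fin n} :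
    x ∈ d.outer ↔ x.val ≤ d.1.1.val ∨ d.1.2.val ≤ x.val := by
  simp [Diag.outer]

theorem Diag.ext_val {d e : Diag n} (h₁ : d.1.1.val = e.1.1.val) (h₂ : d.1.2.val = e.1.2.val) :
    d = e :=
  Subtype.ext (Prod.ext (Fin.ext h₁) (Fin.ext h₂))

theorem Diag.mem_outer_of_notMem_inner {d : Diag n} {x : Fin n} (hx : x ∉ d.inner) :
    x ∈ d.outer := by
  simp only [Diag.mem_inner, Diag.mem_outer] at *
  omega

theorem Diag.inner_subset_inner {d e : Diag n} (h₁ : e.1.1.val ≤ d.1.1.val)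
    (h₂ : d.1.2.val ≤ e.1.2.val) : d.inner ⊆ e.inner := by
  intro x hx
  simp only [Diag.mem_inner] at *
  omega

theorem Diag.inner_subset_outer {d e : Diag n}
    (h : d.1.2.val ≤ e.1.1.val ∨ e.1.2.val ≤ d.1.1.val) : d.inner ⊆ e.outer := by
  intro x hx
  simp only [Diag.mem_inner, Diag.mem_outer] at *
  omega

theorem Diag.inner_inter_outer (d : Diag n) : d.inner ∩ d.outer = {d.1.1, d.1.2} := by
  have hd := d.2.1
  ext x
  simp only [Finset.mem_inter, Diag.mem_inner, Diag.mem_outer, Finset.mem_insert,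
    Finset.mem_singleton, Fin.ext_iff]
  omega

theorem Diag.exists_mem_inner_notMem_outer (d : Diag n) : ∃ x ∈ d.inner, x ∉ d.outer := by
  have hd := d.2.1
  have := d.1.2.isLt
  exact ⟨⟨d.1.1.val + 1, by omega⟩, by simp; omega, by simp; omega⟩

theorem Diag.three_le_card_inner (d : Diag n) : 3 ≤ d.inner.card := by
  have hd := d.2.1
  refine Finset.two_lt_card.2 ⟨d.1.1, ?_, ⟨d.1.1.val + 1, by omega⟩, ?_, d.1.2, ?_, ?_⟩ <;>
    simp [Fin.ext_iff] <;> omega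

theorem Diag.endpoint_ne_of_ne {d e : Diag n} (h : e ≠ d) :
    (d.1.1 ≠ e.1.1 ∧ d.1.1 ≠ e.1.2) ∨ (d.1.2 ≠ e.1.1 ∧ d.1.2 ≠ e.1.2) := by
  have hd := d.2.1
  have he := e.2.1
  have hext : ¬(e.1.1.val = d.1.1.val ∧ e.1.2.val = d.1.2.val) :=
    fun h' => h (Diag.ext_val h'.1 h'.2)
  simp only [ne_eq, Fin.ext_iff]
  omega

theorem Diag.card_inner_add_card_inter_outer {d : Diag n} {M : Finset (Fin n)}
    (hdM : d.inner ⊆ M) :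
    d.inner.card + (M ∩ d.outer).card = M.card + 2 := by
  have hunion : d.inner ∪ M ∩ d.outer = M := by
    refine Finset.union_subset hdM Finset.inter_subset_left |>.antisymm fun x hx => ?_
    by_cases hx' : x ∈ d.inner
    · exact Finset.mem_union_left _ hx'
    · exact Finset.mem_union_right _
        (Finset.mem_inter.2 ⟨hx, Diag.mem_outer_of_notMem_inner hx'⟩)
  have hinter : d.inner ∩ (M ∩ d.outer) = {d.1.1, d.1.2} := by
    rw [← Finset.inter_assoc, Finset.inter_eq_left.2 hdM, d.inner_inter_outer]
  have hd := d.2.1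
  have := Finset.card_union_add_card_inter d.inner (M ∩ d.outer)
  rw [hunion, hinter, Finset.card_pair (Fin.ne_of_val_ne (by omega))] at this
  omega

theorem IsTiling.mono {T T' : Finset (Diag n)} (h : T' ⊆ T) (hT : IsTiling n T) :
    IsTiling n T' :=
  fun d hd e he => hT d (h hd) e (h he)

theorem NonSepSet.mono {T T' : Finset (Diag n)} {S : Finset (Fin n)} (h : T' ⊆ T)
    (hS : NonSepSet n T S) : NonSepSet n T' S :=
  fun x hx y hy e he => hS x hx y hy e (h he)

theorem NonSepSet.subset {T : Finset (Diag n)} {S S' : Finset (Fin n)} (h : S' ⊆ S)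
    (hS : NonSepSet n T S) : NonSepSet n T S' :=
  fun x hx y hy e he => hS x (h hx) y (h hy) e he

theorem nonSepSet_iff {T : Finset (Diag n)} {S : Finset (Fin n)} :
    NonSepSet n T S ↔ ∀ d ∈ T, S ⊆ d.inner ∨ S ⊆ d.outer := by
  constructor
  · intro h d hd
    by_contra! hc
    obtain ⟨x, hx, hx'⟩ := Finset.not_subset.1 hc.1
    obtain ⟨y, hy, hy'⟩ := Finset.not_subset.1 hc.2
    rw [Diag.mem_inner] at hx'
    rw [Diag.mem_outer] at hy'
    exact h y hy x hx d hd (Or.inl ⟨by omega, by omega⟩)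
  · intro h x hx y hy d hd hsep
    rcases h d hd with h' | h' <;>
    · have := h' hx
      have := h' hy
      simp only [Diag.mem_inner, Diag.mem_outer, Sep] at *
      omega

theorem nonSepSet_iff_erase {T : Finset (Diag n)} {d : Diag n} {S : Finset (Fin n)}
    (hd : d ∈ T) :
    NonSepSet n T S ↔ NonSepSet n (T.erase d) S ∧ (S ⊆ d.inner ∨ S ⊆ d.outer) := by
  simp only [nonSepSet_iff, Finset.mem_erase]
  exact ⟨fun h => ⟨fun e he => h e he.2, h d hd⟩,
    fun h e he => if hed : e = d then hed ▸ h.2 else h.1 e ⟨hed, he⟩⟩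

/-- A common vertex that is not an endpoint of `e` lies strictly on one side of `e`, and so
forces both sets to that side. -/
theorem NonSepSet.union {T : Finset (Diag n)} {S₁ S₂ : Finset (Fin n)}
    (h₁ : NonSepSet n T S₁) (h₂ : NonSepSet n T S₂)
    (hcommon : ∀ e ∈ T, ∃ x ∈ S₁, x ∈ S₂ ∧ x ≠ e.1.1 ∧ x ≠ e.1.2) :
    NonSepSet n T (S₁ ∪ S₂) := by
  rw [nonSepSet_iff] at *
  intro e he
  obtain ⟨x, hx₁, hx₂, hx₁', hx₂'⟩ := hcommon e he
  have hx₁' := Fin.val_ne_of_ne hx₁'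
  have hx₂' := Fin.val_ne_of_ne hx₂'
  rcases h₁ e he with h₁ | h₁ <;> rcases h₂ e he with h₂ | h₂
  · exact Or.inl (Finset.union_subset h₁ h₂)
  · have := h₁ hx₁; have := h₂ hx₂; simp only [Diag.mem_inner, Diag.mem_outer] at *; omega
  · have := h₁ hx₁; have := h₂ hx₂; simp only [Diag.mem_inner, Diag.mem_outer] at *; omega
  · exact Or.inr (Finset.union_subset h₁ h₂)

theorem IsTile.subset_of_common_vertex {T : Finset (Diag n)} {S S' : Finset (Fin n)}
    (hS : IsTile n T S) (hS' : NonSepSet n T S')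
    (hcommon : ∀ e ∈ T, ∃ x ∈ S', x ∈ S ∧ x ≠ e.1.1 ∧ x ≠ e.1.2) : S' ⊆ S := by
  rw [← hS.2 _ Finset.subset_union_right (hS'.union hS.1 hcommon)]
  exact Finset.subset_union_left

theorem exists_isTile_superset {T : Finset (Diag n)} {S : Finset (Fin n)}
    (hS : NonSepSet n T S) : ∃ M, IsTile n T M ∧ S ⊆ M := by
  obtain ⟨M, hM, hmax⟩ := Finset.exists_max_image
    (Finset.univ.filter fun S' => S ⊆ S' ∧ NonSepSet n T S') Finset.card ⟨S, by simp [hS]⟩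
  simp only [Finset.mem_filter, Finset.mem_univ, true_and] at hM hmax
  refine ⟨M, ⟨hM.2, fun S' hMS' hS' => ?_⟩, hM.1⟩
  exact (Finset.eq_of_subset_of_card_le hMS' (hmax S' ⟨hM.1.trans hMS', hS'⟩)).symm

theorem mem_tiles {T : Finset (Diag n)} {S : Finset (Fin n)} :
    S ∈ tiles n T ↔ IsTile n T S := by
  simp [tiles]

theorem tiles_empty : tiles n ∅ = {Finset.univ} := by
  have huniv : IsTile n ∅ Finset.univ :=
    ⟨fun _ _ _ _ _ h => by simp at h, fun S' h _ => Finset.univ_subset_iff.1 h⟩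
  ext S
  rw [mem_tiles, Finset.mem_singleton]
  refine ⟨fun hS => ?_, fun h => h ▸ huniv⟩
  exact (hS.2 _ (Finset.subset_univ S) huniv.1).symm

theorem IsTile.inter_notMem_erase_tiles {T : Finset (Diag n)} {M : Finset (Fin n)}
    (hM : IsTile n T M) (X : Finset (Fin n)) : M ∩ X ∉ (tiles n T).erase M := by
  simp only [Finset.mem_erase, mem_tiles, not_and]
  exact fun hne hS => hne (hS.2 M Finset.inter_subset_left hM.1).symm

def IsShortest (T : Finset (Diag n)) (d : Diag n) : Prop :=
  d ∈ T ∧ ∀ e ∈ T, d.1.2.val - d.1.1.val ≤ e.1.2.val - e.1.1.val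

theorem exists_isShortest {T : Finset (Diag n)} (hne : T.Nonempty) : ∃ d, IsShortest T d :=
  let ⟨d, hd, hmin⟩ := T.exists_min_image (fun e => e.1.2.val - e.1.1.val) hne
  ⟨d, hd, hmin⟩

section Shortest

variable {T : Finset (Diag n)} {d : Diag n} {M : Finset (Fin n)}

theorem IsShortest.position (hT : IsTiling n T) (hd : IsShortest T d) {e : Diag n}
    (he : e ∈ T.erase d) :
    e.1.2.val ≤ d.1.1.val ∨ d.1.2.val ≤ e.1.1.val ∨
      (e.1.1.val ≤ d.1.1.val ∧ d.1.2.val ≤ e.1.2.val ∧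
        (e.1.1.val < d.1.1.val ∨ d.1.2.val < e.1.2.val)) := by
  obtain ⟨hne, heT⟩ := Finset.mem_erase.1 he
  have h₁ := hT d hd.1 e heT
  have h₂ := hT e heT d hd.1
  have hlen := hd.2 e heT
  have hd' := d.2.1
  have he' := e.2.1
  have hext : ¬(e.1.1.val = d.1.1.val ∧ e.1.2.val = d.1.2.val) :=
    fun h => hne (Diag.ext_val h.1 h.2)
  simp only [Cross, not_or] at h₁ h₂
  omega

theorem IsShortest.ne_endpoint (hT : IsTiling n T) (hd : IsShortest T d) {x : Fin n}
    (hx₁ : d.1.1.val < x.val) (hx₂ : x.val < d.1.2.val) {e : Diag n} (he : e ∈ T) :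
    x ≠ e.1.1 ∧ x ≠ e.1.2 := by
  by_cases hed : e = d
  · subst hed
    constructor <;> rintro rfl <;> omega
  · have := hd.position hT (Finset.mem_erase.2 ⟨hed, he⟩)
    have := e.2.1
    constructor <;> rintro rfl <;> omega

theorem IsShortest.nonSepSet_inner (hT : IsTiling n T) (hd : IsShortest T d) :
    NonSepSet n T d.inner := by
  refine (nonSepSet_iff_erase hd.1).2 ⟨nonSepSet_iff.2 fun e he => ?_, Or.inl subset_rfl⟩
  rcases hd.position hT he with h | h | h
  · exact Or.inr (Diag.inner_subset_outer (Or.inr h))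
  · exact Or.inr (Diag.inner_subset_outer (Or.inl h))
  · exact Or.inl (Diag.inner_subset_inner h.1 h.2.1)

theorem IsShortest.isTile_inner (hT : IsTiling n T) (hd : IsShortest T d) :
    IsTile n T d.inner := by
  refine ⟨hd.nonSepSet_inner hT, fun S hsub hS => ?_⟩
  rcases nonSepSet_iff.1 hS d hd.1 with h | h
  · exact h.antisymm hsub
  · obtain ⟨x, hx, hx'⟩ := d.exists_mem_inner_notMem_outer
    exact absurd (h (hsub hx)) hx'

theorem IsShortest.exists_isTile_erase_superset (hT : IsTiling n T) (hd : IsShortest T d) :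
    ∃ M, IsTile n (T.erase d) M ∧ d.inner ⊆ M :=
  exists_isTile_superset ((hd.nonSepSet_inner hT).mono (Finset.erase_subset d T))

/-- The witness is `0` or `n - 1` if no diagonal of `T` encloses `d`, and otherwise an endpoint
of the shortest enclosing diagonal. -/
theorem IsShortest.exists_nonSepSet_insert (hT : IsTiling n T) (hd : IsShortest T d) :
    ∃ z ∉ d.inner, NonSepSet n (T.erase d) (insert z d.inner) := by
  obtain ⟨hd₁, hd₂⟩ := d.2
  have hn := d.1.2.isLt
  set E := (T.erase d).filter fun e => e.1.1.val ≤ d.1.1.val ∧ d.1.2.val ≤ e.1.2.val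
  rcases E.eq_empty_or_nonempty with hE | hE
  · refine ⟨if 0 < d.1.1.val then ⟨0, by omega⟩ else ⟨n - 1, by omega⟩, ?_,
      nonSepSet_iff.2 fun e he => Or.inr (Finset.insert_subset ?_ (Diag.inner_subset_outer ?_))⟩
    · split_ifs <;> simp only [Diag.mem_inner] <;> omega
    · have := e.1.2.isLt
      split_ifs <;> simp only [Diag.mem_outer] <;> omega
    · have hnot : ¬(e.1.1.val ≤ d.1.1.val ∧ d.1.2.val ≤ e.1.2.val) := fun h =>
        Finset.notMem_empty e (hE ▸ Finset.mem_filter.2 ⟨he, h⟩)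
      rcases hd.position hT he with h | h | h
      · exact Or.inr h
      · exact Or.inl h
      · exact absurd ⟨h.1, h.2.1⟩ hnot
  · obtain ⟨es, hes, hmin⟩ := E.exists_min_image (fun e => e.1.2.val - e.1.1.val) hE
    have hesT := (Finset.mem_filter.1 hes).1
    have hesd := (Finset.mem_filter.1 hes).2
    have hpos := hd.position hT hesT
    have hes' := es.2.1
    have hesn := es.1.2.isLt
    refine ⟨if es.1.1.val < d.1.1.val then es.1.1 else es.1.2, ?_,
      nonSepSet_iff.2 fun e he => ?_⟩
    · split_ifs <;> simp only [Diag.mem_inner] <;> omega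
    have he' := e.2.1
    have h₁ := hT e (Finset.mem_of_mem_erase he) es (Finset.mem_of_mem_erase hesT)
    have h₂ := hT es (Finset.mem_of_mem_erase hesT) e (Finset.mem_of_mem_erase he)
    simp only [Cross, not_or] at h₁ h₂
    rcases hd.position hT he with h | h | h
    · refine Or.inr (Finset.insert_subset ?_ (Diag.inner_subset_outer (Or.inr h)))
      split_ifs <;> simp only [Diag.mem_outer] <;> omega
    · refine Or.inr (Finset.insert_subset ?_ (Diag.inner_subset_outer (Or.inl h)))
      split_ifs <;> simp only [Diag.mem_outer] <;> omega
    · have hlen := hmin e (Finset.mem_filter.2 ⟨he, h.1, h.2.1⟩)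
      refine Or.inl (Finset.insert_subset ?_ (Diag.inner_subset_inner h.1 h.2.1))
      split_ifs <;> simp only [Diag.mem_inner] <;> omega

theorem IsShortest.eq_of_isTile_erase (hT : IsTiling n T) (hd : IsShortest T d)
    (hM : IsTile n (T.erase d) M) (hdM : d.inner ⊆ M) {S : Finset (Fin n)}
    (hS : IsTile n (T.erase d) S) {x : Fin n} (hx : x ∈ S) (hx₁ : d.1.1.val < x.val)
    (hx₂ : x.val < d.1.2.val) : S = M := by
  refine (hS.2 M (hM.subset_of_common_vertex hS.1 fun e he => ⟨x, hx, hdM ?_, ?_⟩) hM.1).symm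
  · simp only [Diag.mem_inner]; omega
  · exact hd.ne_endpoint hT hx₁ hx₂ (Finset.mem_of_mem_erase he)

theorem IsShortest.subset_outer_of_ne (hT : IsTiling n T) (hd : IsShortest T d)
    (hM : IsTile n (T.erase d) M) (hdM : d.inner ⊆ M) {S : Finset (Fin n)}
    (hS : IsTile n (T.erase d) S) (hSM : S ≠ M) : S ⊆ d.outer := by
  intro x hx
  by_contra hout
  rw [Diag.mem_outer] at hout
  exact hSM (hd.eq_of_isTile_erase hT hM hdM hS hx (by omega) (by omega))

theorem IsShortest.isTile_of_ne (hT : IsTiling n T) (hd : IsShortest T d)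
    (hM : IsTile n (T.erase d) M) (hdM : d.inner ⊆ M) {S : Finset (Fin n)}
    (hS : IsTile n (T.erase d) S) (hSM : S ≠ M) : IsTile n T S :=
  ⟨(nonSepSet_iff_erase hd.1).2 ⟨hS.1, Or.inr (hd.subset_outer_of_ne hT hM hdM hS hSM)⟩,
    fun S' h h' => hS.2 S' h (h'.mono (Finset.erase_subset d T))⟩

theorem IsShortest.exists_mem_notMem_inner (hT : IsTiling n T) (hd : IsShortest T d)
    (hM : IsTile n (T.erase d) M) (hdM : d.inner ⊆ M) : ∃ z ∈ M, z ∉ d.inner := by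
  obtain ⟨z, hz, hzT⟩ := hd.exists_nonSepSet_insert hT
  obtain ⟨M', hM', hzM'⟩ := exists_isTile_superset hzT
  obtain ⟨x, hx, hx'⟩ := d.exists_mem_inner_notMem_outer
  simp only [Diag.mem_inner, Diag.mem_outer] at hx hx'
  refine ⟨z, ?_, hz⟩
  rw [← hd.eq_of_isTile_erase hT hM hdM hM' (hzM' (Finset.mem_insert_of_mem (by simpa)))
    (by omega) (by omega)]
  exact hzM' (Finset.mem_insert_self z _)

theorem IsShortest.isTile_inter_outer (hT : IsTiling n T) (hd : IsShortest T d)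
    (hM : IsTile n (T.erase d) M) (hdM : d.inner ⊆ M) : IsTile n T (M ∩ d.outer) := by
  refine ⟨(nonSepSet_iff_erase hd.1).2 ⟨hM.1.subset Finset.inter_subset_left,
    Or.inr Finset.inter_subset_right⟩, fun S hsub hS => ?_⟩
  obtain ⟨hS, hside⟩ := (nonSepSet_iff_erase hd.1).1 hS
  obtain ⟨z, hzM, hz⟩ := hd.exists_mem_notMem_inner hT hM hdM
  have hd' := d.2.1
  have hmem : ∀ x ∈ d.inner, x ∈ d.outer → x ∈ S := fun x hx hx' =>
    hsub (Finset.mem_inter.2 ⟨hdM hx, hx'⟩)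
  have ha : d.1.1 ∈ S := hmem _ (by simp; omega) (by simp)
  have hb : d.1.2 ∈ S := hmem _ (by simp; omega) (by simp)
  have hout : S ⊆ d.outer := hside.resolve_left fun h =>
    hz (h (hsub (Finset.mem_inter.2 ⟨hzM, Diag.mem_outer_of_notMem_inner hz⟩)))
  have hSM : S ⊆ M := hM.subset_of_common_vertex hS fun e he => by
    rcases Diag.endpoint_ne_of_ne (Finset.ne_of_mem_erase he) with h | h
    · exact ⟨_, ha, hdM (by simp; omega), h⟩
    · exact ⟨_, hb, hdM (by simp; omega), h⟩
  exact (Finset.subset_inter hSM hout).antisymm hsub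

theorem IsShortest.tiles_eq (hT : IsTiling n T) (hd : IsShortest T d)
    (hM : IsTile n (T.erase d) M) (hdM : d.inner ⊆ M) :
    tiles n T = insert d.inner (insert (M ∩ d.outer) ((tiles n (T.erase d)).erase M)) := by
  ext S
  simp only [Finset.mem_insert, Finset.mem_erase, mem_tiles]
  constructor
  · intro hS
    rcases ((nonSepSet_iff_erase hd.1).1 hS.1).2 with h | h
    · exact Or.inl (hS.2 _ h (hd.nonSepSet_inner hT)).symm
    · obtain ⟨S', hS', hSS'⟩ :=
        exists_isTile_superset (hS.1.mono (Finset.erase_subset d T))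
      by_cases hS'M : S' = M
      · subst hS'M
        exact Or.inr (Or.inl (hS.2 _ (Finset.subset_inter hSS' h)
          (hd.isTile_inter_outer hT hM hdM).1).symm)
      · obtain rfl : S' = S := hS.2 S' hSS' (hd.isTile_of_ne hT hM hdM hS' hS'M).1
        exact Or.inr (Or.inr ⟨hS'M, hS'⟩)
  · rintro (rfl | rfl | ⟨hSM, hS⟩)
    · exact hd.isTile_inner hT
    · exact hd.isTile_inter_outer hT hM hdM
    · exact hd.isTile_of_ne hT hM hdM hS hSM

theorem IsShortest.inner_notMem (hT : IsTiling n T) (hd : IsShortest T d)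
    (hM : IsTile n (T.erase d) M) (hdM : d.inner ⊆ M) :
    d.inner ∉ insert (M ∩ d.outer) ((tiles n (T.erase d)).erase M) := by
  obtain ⟨x, hx, hx'⟩ := d.exists_mem_inner_notMem_outer
  simp only [Finset.mem_insert, Finset.mem_erase, mem_tiles, not_or, not_and]
  refine ⟨fun h => hx' (Finset.mem_of_mem_inter_right (h ▸ hx)), fun hne hS => ?_⟩
  exact hx' (hd.subset_outer_of_ne hT hM hdM hS hne hx)

theorem IsShortest.card_tiles (hT : IsTiling n T) (hd : IsShortest T d) :
    (tiles n T).card = (tiles n (T.erase d)).card + 1 := by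
  obtain ⟨M, hM, hdM⟩ := hd.exists_isTile_erase_superset hT
  rw [hd.tiles_eq hT hM hdM, Finset.card_insert_of_notMem (hd.inner_notMem hT hM hdM),
    Finset.card_insert_of_notMem (hM.inter_notMem_erase_tiles _),
    ← Finset.card_erase_add_one (mem_tiles.2 hM)]

theorem IsShortest.sum_card_tiles (hT : IsTiling n T) (hd : IsShortest T d) :
    ∑ S ∈ tiles n T, S.card = ∑ S ∈ tiles n (T.erase d), S.card + 2 := by
  obtain ⟨M, hM, hdM⟩ := hd.exists_isTile_erase_superset hT
  rw [hd.tiles_eq hT hM hdM, Finset.sum_insert (hd.inner_notMem hT hM hdM),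
    Finset.sum_insert (hM.inter_notMem_erase_tiles _),
    ← Finset.add_sum_erase _ _ (mem_tiles.2 hM)]
  have := Diag.card_inner_add_card_inter_outer hdM
  omega

theorem IsShortest.three_le_card_of_mem_tiles (hT : IsTiling n T) (hd : IsShortest T d)
    (h : ∀ S ∈ tiles n (T.erase d), 3 ≤ S.card) : ∀ S ∈ tiles n T, 3 ≤ S.card := by
  obtain ⟨M, hM, hdM⟩ := hd.exists_isTile_erase_superset hT
  obtain ⟨z, hzM, hz⟩ := hd.exists_mem_notMem_inner hT hM hdM
  have hd' := d.2.1
  rw [hd.tiles_eq hT hM hdM]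
  simp only [Finset.mem_insert, Finset.mem_erase]
  rintro S (rfl | rfl | ⟨-, hS⟩)
  · exact d.three_le_card_inner
  · have ha : d.1.1 ∈ M ∩ d.outer := Finset.mem_inter.2 ⟨hdM (by simp; omega), by simp⟩
    have hb : d.1.2 ∈ M ∩ d.outer := Finset.mem_inter.2 ⟨hdM (by simp; omega), by simp⟩
    have hz' := Finset.mem_inter.2 ⟨hzM, Diag.mem_outer_of_notMem_inner hz⟩
    simp only [Diag.mem_inner] at hz
    refine Finset.two_lt_card.2 ⟨_, ha, _, hb, z, hz', ?_, ?_, ?_⟩ <;>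
      simp only [ne_eq, Fin.ext_iff] <;> omega
  · exact h S hS

end Shortest

@[elab_as_elim]
theorem IsTiling.induction_on_shortest {P : Finset (Diag n) → Prop} {T : Finset (Diag n)}
    (hT : IsTiling n T) (empty : P ∅)
    (step : ∀ T d, IsTiling n T → IsShortest T d → P (T.erase d) → P T) : P T := by
  induction T using Finset.strongInduction with
  | H T ih =>
    rcases T.eq_empty_or_nonempty with rfl | hne
    · exact empty
    · obtain ⟨d, hd⟩ := exists_isShortest hne
      exact step T d hT hd (ih _ (Finset.erase_ssubset hd.1) (hT.mono (Finset.erase_subset d T)))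

theorem card_tiles {T : Finset (Diag n)} (hT : IsTiling n T) :
    (tiles n T).card = T.card + 1 := by
  refine hT.induction_on_shortest (by simp [tiles_empty]) fun T d hT hd ih => ?_
  rw [hd.card_tiles hT, ih, Finset.card_erase_add_one hd.1]

theorem sum_card_tiles {T : Finset (Diag n)} (hT : IsTiling n T) :
    ∑ S ∈ tiles n T, S.card = n + 2 * T.card := by
  refine hT.induction_on_shortest (by simp [tiles_empty]) fun T d hT hd ih => ?_
  rw [hd.sum_card_tiles hT, ih, ← Finset.card_erase_add_one hd.1]
  ring

theorem three_le_card_of_mem_tiles (hn : 3 ≤ n) {T : Finset (Diag n)} (hT : IsTiling n T) :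
    ∀ S ∈ tiles n T, 3 ≤ S.card := by
  refine hT.induction_on_shortest (by simpa [tiles_empty]) fun T d hT hd ih => ?_
  exact hd.three_le_card_of_mem_tiles hT ih

theorem card_shape {T : Finset (Diag n)} (hT : IsTiling n T) :
    Multiset.card (shape n T) = T.card + 1 := by
  rw [shape, Multiset.card_map, ← card_tiles hT]
  rfl

theorem one_le_of_mem_shape (hn : 3 ≤ n) {T : Finset (Diag n)} (hT : IsTiling n T) :
    ∀ x ∈ shape n T, 1 ≤ x := by
  simp only [shape, Multiset.mem_map]
  rintro _ ⟨S, hS, rfl⟩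
  have := three_le_card_of_mem_tiles hn hT S hS
  omega

theorem sum_shape_add_two (hn : 3 ≤ n) {T : Finset (Diag n)} (hT : IsTiling n T) :
    (shape n T).sum + 2 = n := by
  have h : ∑ S ∈ tiles n T, (S.card - 2 + 2) = ∑ S ∈ tiles n T, S.card :=
    Finset.sum_congr rfl fun S hS => by have := three_le_card_of_mem_tiles hn hT S hS; omega
  rw [Finset.sum_add_distrib, Finset.sum_const, card_tiles hT, sum_card_tiles hT,
    smul_eq_mul] at h
  change ∑ S ∈ tiles n T, (S.card - 2) + 2 = n
  omega

open Finset in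
theorem sum_range_neg_one_pow_mul_card_filter_pcomp_shape (r : ℕ)
    {T : Finset (Diag (r + 3))} (hT : IsTiling (r + 3) T) :
    ∑ m ∈ range (r + 1), (-1 : ℤ) ^ m *
      #{ρ : Nat.Partition m | pcomp (r + 1) (pplus ρ.parts) = shape (r + 3) T}
      = (-1) ^ r * (-1) ^ T.card := by
  have hsum : (shape (r + 3) T).sum = r + 1 := by
    have := sum_shape_add_two (by omega) hT
    omega
  have hpos := one_le_of_mem_shape (by omega) hT
  have hcard := card_shape hT
  have hle := Multiset.card_nsmul_le_sum hpos
  rw [← hsum, sum_range_neg_one_pow_mul_card_filter_pcomp hpos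
    (Multiset.card_pos.1 (by omega)), hsum, hcard]
  rw [smul_eq_mul, mul_one, hcard, hsum] at hle
  have hr : (-1 : ℤ) ^ r = (-1) ^ (r - T.card) * (-1) ^ T.card := by
    rw [← pow_add, Nat.sub_add_cancel (by omega)]
  rw [hr, mul_assoc, ← pow_add, ← two_mul, pow_mul,
    show r + 1 - (T.card + 1) = r - T.card by omega]
  simp

theorem not_cross_self (e : Diag n) : ¬Cross e e := by
  simp [Cross]

theorem isTiling_insert {T : Finset (Diag n)} {e : Diag n} :
    IsTiling n (insert e T) ↔ IsTiling n T ∧ ∀ f ∈ T, ¬Cross e f ∧ ¬Cross f e := by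
  simp only [IsTiling, Finset.mem_insert, forall_eq_or_imp]
  exact ⟨fun h => ⟨fun d hd f hf => (h.2 d hd).2 f hf,
      fun f hf => ⟨h.1.2 f hf, (h.2 f hf).1⟩⟩,
    fun h => ⟨⟨not_cross_self e, fun f hf => (h.2 f hf).1⟩,
      fun d hd => ⟨(h.2 d hd).2, h.1 d hd⟩⟩⟩

theorem not_cross_of_fst_eq {e f : Diag n} (h : e.1.1 = f.1.1) : ¬Cross e f := by
  simp [Cross, h]

def toggle (T : Finset (Diag n)) (e : Diag n) : Finset (Diag n) :=
  if e ∈ T then T.erase e else insert e T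

theorem toggle_toggle (T : Finset (Diag n)) (e : Diag n) : toggle (toggle T e) e = T := by
  unfold toggle
  split_ifs with h₁ h₂ h₂
  · simp at h₂
  · exact Finset.insert_erase h₁
  · exact Finset.erase_insert h₁
  · simp at h₂

theorem toggle_ne_self (T : Finset (Diag n)) (e : Diag n) : toggle T e ≠ T := by
  unfold toggle
  split_ifs with h
  · exact fun h' => Finset.notMem_erase e T (by rwa [h'])
  · exact fun h' => h (h' ▸ Finset.mem_insert_self e T)

theorem mem_toggle_of_ne {T : Finset (Diag n)} {e f : Diag n} (h : f ≠ e) :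
    f ∈ toggle T e ↔ f ∈ T := by
  unfold toggle
  split_ifs <;> simp [h]

theorem neg_one_pow_card_toggle (T : Finset (Diag n)) (e : Diag n) :
    (-1 : ℤ) ^ (toggle T e).card = -(-1) ^ T.card := by
  unfold toggle
  split_ifs with h
  · rw [← Finset.card_erase_add_one h, pow_succ]
    ring
  · rw [Finset.card_insert_of_notMem h, pow_succ]
    ring

def IsToggle (T : Finset (Diag n)) (e : Diag n) : Prop :=
  e.1.1.val = 0 ∧ (e ∈ T ∨ IsTiling n (insert e T))

def IsLeastToggle (T : Finset (Diag n)) (e : Diag n) : Prop :=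
  IsToggle T e ∧ ∀ f, IsToggle T f → e.1.2.val ≤ f.1.2.val

theorem IsLeastToggle.unique {T : Finset (Diag n)} {e f : Diag n} (he : IsLeastToggle T e)
    (hf : IsLeastToggle T f) : e = f :=
  Diag.ext_val (he.1.1.trans hf.1.1.symm) ((he.2 f hf.1).antisymm (hf.2 e he.1))

theorem exists_isLeastToggle {T : Finset (Diag n)} (h : ∃ e, IsToggle T e) :
    ∃ e, IsLeastToggle T e := by
  obtain ⟨e, he, hmin⟩ := Finset.exists_min_image (Finset.univ.filter (IsToggle T))
    (fun e => e.1.2.val) (let ⟨e, he⟩ := h; ⟨e, by simpa using he⟩)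
  simp only [Finset.mem_filter, Finset.mem_univ, true_and] at he hmin
  exact ⟨e, he, hmin⟩

theorem IsToggle.isTiling_toggle {T : Finset (Diag n)} {e : Diag n} (hT : IsTiling n T)
    (he : IsToggle T e) : IsTiling n (toggle T e) := by
  unfold toggle
  split_ifs with h
  · exact hT.mono (Finset.erase_subset e T)
  · exact he.2.resolve_left h

theorem IsToggle.isToggle_toggle {T : Finset (Diag n)} {e : Diag n} (hT : IsTiling n T)
    (he : IsToggle T e) : IsToggle (toggle T e) e := by
  refine ⟨he.1, ?_⟩
  unfold toggle
  split_ifs with h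
  · exact Or.inr ((Finset.insert_erase h).symm ▸ hT)
  · exact Or.inl (Finset.mem_insert_self e T)

/-- A diagonal from `0` shorter than `e` shares the endpoint `0` with `e`, so toggling `e` does
not change whether it can be toggled. -/
theorem IsLeastToggle.isLeastToggle_toggle {T : Finset (Diag n)} {e : Diag n} (hT : IsTiling n T)
    (he : IsLeastToggle T e) : IsLeastToggle (toggle T e) e := by
  refine ⟨he.1.isToggle_toggle hT, fun f hf => ?_⟩
  by_contra! hlt
  have hfe : f ≠ e := fun h => by rw [h] at hlt; omega
  refine absurd (he.2 f ⟨hf.1, ?_⟩) (by omega)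
  have hfst : f.1.1 = e.1.1 := Fin.ext (hf.1.trans he.1.1.symm)
  unfold toggle at hf
  split_ifs at hf with h
  · refine hf.2.imp Finset.mem_of_mem_erase fun hfT => ?_
    refine isTiling_insert.2 ⟨hT, fun g hg => ?_⟩
    by_cases hge : g = e
    · exact hge ▸ ⟨not_cross_of_fst_eq hfst, not_cross_of_fst_eq hfst.symm⟩
    · exact (isTiling_insert.1 hfT).2 g (Finset.mem_erase.2 ⟨hge, hg⟩)
  · refine hf.2.imp (fun hf' => (Finset.mem_insert.1 hf').resolve_left hfe) fun hfT => ?_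
    exact hfT.mono (Finset.insert_subset_insert f (Finset.subset_insert e T))

def tilings (n : ℕ) : Finset (Finset (Diag n)) :=
  Finset.univ.filter (IsTiling n)

@[simp]
theorem mem_tilings {T : Finset (Diag n)} : T ∈ tilings n ↔ IsTiling n T := by
  simp [tilings]

def cornerDiag (n : ℕ) : Diag (n + 4) :=
  ⟨(⟨1, by omega⟩, ⟨n + 3, by omega⟩), by constructor <;> simp⟩

/-- If no `{0, b}` can be toggled, each is crossed by a diagonal of `T`. For the longest
`{1, c} ∈ T`, the diagonal crossing `{0, c}` would start at `1` and end beyond `c`; so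
`c = n + 3`. -/
theorem exists_isToggle {T : Finset (Diag (n + 4))} (hT : IsTiling (n + 4) T)
    (hc : cornerDiag n ∉ T) : ∃ e, IsToggle T e := by
  by_contra! hno
  have hblock : ∀ b, 2 ≤ b → b ≤ n + 2 →
      ∃ f ∈ T, 0 < f.1.1.val ∧ f.1.1.val < b ∧ b < f.1.2.val := by
    intro b hb₁ hb₂
    let e : Diag (n + 4) :=
      ⟨(⟨0, by omega⟩, ⟨b, by omega⟩), by constructor <;> simp <;> omega⟩
    have hnot : ¬IsTiling (n + 4) (insert e T) := fun h => hno e ⟨rfl, Or.inr h⟩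
    rw [isTiling_insert] at hnot
    push Not at hnot
    obtain ⟨f, hf, hcross⟩ := hnot hT
    have := f.2.1
    refine ⟨f, hf, ?_⟩
    by_cases h : Cross e f
    · simp only [Cross, e] at h
      omega
    · simp only [Cross, e] at hcross h
      omega
  obtain ⟨g, hg, hmax⟩ := (T.filter fun f => f.1.1.val = 1).exists_max_image
    (fun f => f.1.2.val) (by
      obtain ⟨f, hf, h⟩ := hblock 2 le_rfl (by omega)
      exact ⟨f, Finset.mem_filter.2 ⟨hf, by omega⟩⟩)
  rw [Finset.mem_filter] at hg
  have := g.2.1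
  have := g.1.2.isLt
  by_cases hgn : g.1.2.val = n + 3
  · have : g = cornerDiag n := Diag.ext_val hg.2 hgn
    exact hc (this ▸ hg.1)
  · obtain ⟨f, hf, h⟩ := hblock g.1.2.val (by omega) (by omega)
    have hgf := hT g hg.1 f hf
    simp only [Cross] at hgf
    have := hmax f (Finset.mem_filter.2 ⟨hf, by omega⟩)
    omega

def zeroToggle (T : Finset (Diag n)) : Finset (Diag n) :=
  if h : ∃ e, IsLeastToggle T e then toggle T h.choose else T

theorem IsLeastToggle.zeroToggle_eq {T : Finset (Diag n)} {e : Diag n}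
    (he : IsLeastToggle T e) : zeroToggle T = toggle T e := by
  rw [zeroToggle, dif_pos ⟨e, he⟩, (Exists.choose_spec ⟨e, he⟩).unique he]

theorem sum_neg_one_pow_card_filter_cornerDiag_notMem :
    ∑ T ∈ (tilings (n + 4)).filter (cornerDiag n ∉ ·), (-1 : ℤ) ^ T.card = 0 := by
  have key : ∀ T ∈ (tilings (n + 4)).filter (cornerDiag n ∉ ·),
      IsTiling (n + 4) T ∧ cornerDiag n ∉ T ∧ ∃ e, IsLeastToggle T e := by
    intro T hT
    simp only [Finset.mem_filter, mem_tilings] at hT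
    exact ⟨hT.1, hT.2, exists_isLeastToggle (exists_isToggle hT.1 hT.2)⟩
  refine Finset.sum_involution (fun T _ => zeroToggle T) (fun T hT => ?_) (fun T hT _ => ?_)
    (fun T hT => ?_) (fun T hT => ?_) <;>
  obtain ⟨hT, hc, e, he⟩ := key T hT <;>
  rw [he.zeroToggle_eq]
  · rw [neg_one_pow_card_toggle, add_neg_cancel]
  · exact toggle_ne_self T e
  · have hce : cornerDiag n ≠ e := fun h => by
      have := he.1.1
      simp [← h, cornerDiag] at this
    rw [Finset.mem_filter, mem_tilings, mem_toggle_of_ne hce]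
    exact ⟨he.1.isTiling_toggle hT, hc⟩
  · rw [(he.isLeastToggle_toggle hT).zeroToggle_eq, toggle_toggle]

/-- The `n`-gon as the part of the `(n + 1)`-gon beyond the diagonal `{1, n}`: vertex `i`
becomes `i + 1`. -/
def Diag.shift (e : Diag n) : Diag (n + 1) :=
  ⟨(e.1.1.succ, e.1.2.succ), ⟨by simpa using e.2.1, by simp⟩⟩

theorem Diag.shift_injective : Function.Injective (Diag.shift (n := n)) := fun e f h => by
  have h₁ := congrArg (fun e : Diag (n + 1) => e.1.1.val) h
  have h₂ := congrArg (fun e : Diag (n + 1) => e.1.2.val) h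
  simp only [Diag.shift, Fin.val_succ, Nat.add_right_cancel_iff] at h₁ h₂
  exact Diag.ext_val h₁ h₂

theorem cross_shift_iff {e f : Diag n} : Cross e.shift f.shift ↔ Cross e f := by
  simp only [Cross, Diag.shift, Fin.val_succ, Nat.add_lt_add_iff_right]

theorem isTiling_image_shift {T : Finset (Diag n)} :
    IsTiling (n + 1) (T.image Diag.shift) ↔ IsTiling n T := by
  simp only [IsTiling, Finset.forall_mem_image, cross_shift_iff]

theorem shift_ne_cornerDiag (e : Diag (n + 3)) : e.shift ≠ cornerDiag n := by
  intro h
  have h₁ := congrArg (fun e : Diag (n + 4) => e.1.1.val) h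
  have h₂ := congrArg (fun e : Diag (n + 4) => e.1.2.val) h
  simp only [Diag.shift, cornerDiag, Fin.val_succ] at h₁ h₂
  exact e.2.2 ⟨by omega, by omega⟩

theorem not_cross_cornerDiag_shift (e : Diag (n + 3)) :
    ¬Cross (cornerDiag n) e.shift ∧ ¬Cross e.shift (cornerDiag n) := by
  have := e.1.2.isLt
  simp only [Cross, Diag.shift, cornerDiag, Fin.val_succ]
  omega

theorem exists_shift_eq {T : Finset (Diag (n + 4))} (hT : IsTiling (n + 4) T)
    (hc : cornerDiag n ∈ T) {e : Diag (n + 4)} (he : e ∈ T) (hne : e ≠ cornerDiag n) :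
    ∃ e' : Diag (n + 3), e'.shift = e := by
  have hcross := hT e he _ hc
  obtain ⟨he₁, he₂⟩ := e.2
  have := e.1.2.isLt
  have hext : ¬(e.1.1.val = 1 ∧ e.1.2.val = n + 3) := fun h => hne (Diag.ext_val h.1 h.2)
  simp only [Cross, cornerDiag] at hcross
  refine ⟨⟨(⟨e.1.1.val - 1, by omega⟩, ⟨e.1.2.val - 1, by omega⟩), ?_⟩, ?_⟩
  · constructor <;> simp <;> omega
  · exact Diag.ext_val (show e.1.1.val - 1 + 1 = _ by omega) (show e.1.2.val - 1 + 1 = _ by omega)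

theorem sum_neg_one_pow_card_filter_cornerDiag_mem :
    ∑ T ∈ (tilings (n + 4)).filter (cornerDiag n ∈ ·), (-1 : ℤ) ^ T.card
      = -∑ T ∈ tilings (n + 3), (-1 : ℤ) ^ T.card := by
  rw [← Finset.sum_neg_distrib]
  symm
  refine Finset.sum_nbij' (fun T => insert (cornerDiag n) (T.image Diag.shift))
    (fun T => Finset.univ.filter (·.shift ∈ T)) (fun T hT => ?_) (fun T hT => ?_)
    (fun T hT => ?_) (fun T hT => ?_) (fun T hT => ?_)
  · have hT' := mem_tilings.1 hT
    simp only [Finset.mem_filter, mem_tilings, Finset.mem_insert_self, and_true]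
    refine isTiling_insert.2 ⟨isTiling_image_shift.2 hT', ?_⟩
    simpa only [Finset.forall_mem_image] using fun e _ => not_cross_cornerDiag_shift e
  · simp only [Finset.mem_filter, mem_tilings] at hT ⊢
    exact isTiling_image_shift.1 (hT.1.mono (by simp [Finset.image_subset_iff]))
  · ext e
    simp [shift_ne_cornerDiag, Diag.shift_injective.mem_finset_image]
  · simp only [Finset.mem_filter, mem_tilings] at hT
    ext e
    simp only [Finset.mem_insert, Finset.mem_image, Finset.mem_filter, Finset.mem_univ, true_and]
    refine ⟨?_, fun he => ?_⟩
    · rintro (rfl | ⟨e', he', rfl⟩)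
      exacts [hT.2, he']
    · by_cases hc : e = cornerDiag n
      · exact Or.inl hc
      · obtain ⟨e', rfl⟩ := exists_shift_eq hT.1 hT.2 he hc
        exact Or.inr ⟨e', he, rfl⟩
  · have : cornerDiag n ∉ T.image Diag.shift := by
      simpa only [Finset.mem_image, not_exists, not_and] using
        fun e _ => shift_ne_cornerDiag e
    rw [Finset.card_insert_of_notMem this, Finset.card_image_of_injective _ Diag.shift_injective,
      pow_succ]
    ring

theorem sum_neg_one_pow_card_tilings (n : ℕ) :
    ∑ T ∈ tilings (n + 3), (-1 : ℤ) ^ T.card = (-1) ^ n := by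
  induction n with
  | zero =>
    have : IsEmpty (Diag 3) :=
      ⟨fun d => by obtain ⟨h₁, h₂⟩ := d.2; have := d.1.2.isLt; omega⟩
    have htilings : tilings 3 = {∅} := by
      ext T
      simp [Finset.eq_empty_of_isEmpty T, IsTiling]
    simp [htilings]
  | succ n ih =>
    rw [← Finset.sum_filter_add_sum_filter_not (tilings (n + 4)) (cornerDiag n ∈ ·),
      sum_neg_one_pow_card_filter_cornerDiag_mem, sum_neg_one_pow_card_filter_cornerDiag_notMem,
      ih, pow_succ]
    ring

open Finset in
theorem sum_a_eq_sum_tilings {ι : Type*} [Fintype ι] (n : ℕ) (f : ι → Multiset ℕ) :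
    ∑ i, a n (f i) = ∑ T ∈ tilings n, #{i | f i = shape n T} := by
  have := sum_card_bipartiteAbove_eq_sum_card_bipartiteBelow (s := univ) (t := tilings n)
    (fun i T => shape n T = f i)
  simp only [bipartiteAbove, bipartiteBelow, filter_filter, tilings] at this
  simp only [a, tilings]
  rw [this]
  refine sum_congr rfl fun T _ => ?_
  simp only [eq_comm]

end Polygon

/-- `F_r := Σ_{m=0}^{r} (-1)^m Σ_{ρ ⊢ m} a_{r+3}(\bar{ρ⁺}) = 1` for all
`r ≥ 0`, where `\bar{ρ⁺}` is the completion of `ρ⁺` by parts `1` to weight `r+1`. -/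
theorem stmt15 (r : ℕ) :
    ∑ m ∈ Finset.range (r + 1), (-1 : ℤ) ^ m *
      ∑ ρ : Nat.Partition m, (Polygon.a (r + 3) (pcomp (r + 1) (pplus ρ.parts)) : ℤ)
      = 1 := by
  calc _ = ∑ T ∈ Polygon.tilings (r + 3), ∑ m ∈ Finset.range (r + 1), (-1 : ℤ) ^ m *
          ((Finset.univ.filter fun ρ : Nat.Partition m =>
            pcomp (r + 1) (pplus ρ.parts) = Polygon.shape (r + 3) T).card : ℤ) := by
        simp_rw [← Nat.cast_sum, Polygon.sum_a_eq_sum_tilings, Nat.cast_sum, Finset.mul_sum]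
        exact Finset.sum_comm
    _ = ∑ T ∈ Polygon.tilings (r + 3), (-1 : ℤ) ^ r * (-1) ^ T.card :=
        Finset.sum_congr rfl fun T hT =>
          Polygon.sum_range_neg_one_pow_mul_card_filter_pcomp_shape r
            (Polygon.mem_tilings.1 hT)
    _ = 1 := by
        rw [← Finset.mul_sum, Polygon.sum_neg_one_pow_card_tilings, ← mul_pow]
        simp
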